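/- Let n ≥ 1 and K ≥ 1 be integers, let S ∈ ℂ^{n×n}, let ε > 0, and let E ∈ ℂ^{n×n} satisfy ‖E‖₂ ≤ ε; set Ŝ = S + E. Let h = (h_0,…,h_K) and ĥ = (ĥ_0,…,ĥ_K) be vectors in ℂ^{K+1} and set δ = ĥ − h. Assume R := ρ_ε(S) > 0 and let M = M(K,R). Then the spectral radius of the matrix Σ_{k=0}^K δ_k Ŝ^k (i.e. of H_ĥ(Ŝ) − H_h(Ŝ)) satisfies ρ(Σ_{k=0}^K δ_k Ŝ^k) ≤ max_{0≤i≤K} (M⁻¹ |δ|)_i, where |δ| denotes the vector (|δ_0|,…,|δ_K|) ∈ ℝ^{K+1}. -/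

import Mathlib

open scoped BigOperators
open Matrix

/-- Operator 2-norm (largest singular value) of a complex matrix. -/
noncomputable def opNorm {m n : ℕ} (A : Matrix (Fin m) (Fin n) ℂ) : ℝ :=
  ‖LinearMap.toContinuousLinearMap (Matrix.toEuclideanLin A)‖

/-- Euclidean norm of a complex vector. -/
noncomputable def vnorm {n : ℕ} (x : Fin n → ℂ) : ℝ :=
  ‖(WithLp.equiv 2 (Fin n → ℂ)).symm x‖

/-- Spectral radius: maximum modulus of the eigenvalues. -/
noncomputable def specRad {n : ℕ} (A : Matrix (Fin n) (Fin n) ℂ) : ℝ :=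
  sSup ((fun z : ℂ => ‖z‖) '' spectrum ℂ A)

/-- ε-pseudospectrum. -/
def pseudoSpec {n : ℕ} (ε : ℝ) (A : Matrix (Fin n) (Fin n) ℂ) : Set ℂ :=
  {z | ∃ E : Matrix (Fin n) (Fin n) ℂ, opNorm E ≤ ε ∧ z ∈ spectrum ℂ (A + E)}

/-- ε-pseudospectral radius. -/
noncomputable def pseudoSpecRad {n : ℕ} (ε : ℝ) (A : Matrix (Fin n) (Fin n) ℂ) : ℝ :=
  sSup ((fun z : ℂ => ‖z‖) '' pseudoSpec ε A)

/-- The Bernstein change-of-basis matrix M(K,R):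
`M_{i,j} = (−1)^{i−j} C(K,j) C(K−j, i−j) / R^i` for `j ≤ i`, and `0` otherwise. -/
noncomputable def Mmat (K : ℕ) (R : ℝ) : Matrix (Fin (K+1)) (Fin (K+1)) ℝ :=
  fun i j =>
    if (j : ℕ) ≤ (i : ℕ) then
      ((-1 : ℝ) ^ ((i : ℕ) - (j : ℕ)) * (K.choose j) *
        ((K - (j : ℕ)).choose ((i : ℕ) - (j : ℕ)))) / R ^ (i : ℕ)
    else 0

/-- Graph filter `H_h(S) = Σ_{k=0}^K h_k S^k`. -/
noncomputable def filt {n : ℕ} (K : ℕ) (h : ℕ → ℂ) (S : Matrix (Fin n) (Fin n) ℂ) :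
    Matrix (Fin n) (Fin n) ℂ :=
  ∑ k ∈ Finset.range (K+1), h k • S ^ k

/-- Vector of absolute values of the first K+1 coefficients. -/
noncomputable def absVec (K : ℕ) (h : ℕ → ℂ) : Fin (K+1) → ℝ := fun i => ‖h i‖

/-- The constant `M̄ = max_{0≤ℓ≤K} Σ_{k=ℓ}^K |h_k| C(k,ℓ) ‖S‖₂^{k−ℓ}`. -/
noncomputable def Mbar {n : ℕ} (K : ℕ) (h : ℕ → ℂ) (S : Matrix (Fin n) (Fin n) ℂ) : ℝ :=
  ⨆ ℓ : Fin (K+1), ∑ k ∈ Finset.Icc (ℓ : ℕ) K,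
    ‖h k‖ * (k.choose ℓ) * opNorm S ^ (k - (ℓ : ℕ))

/-- Complex ReLU: `CReLU(x + iy) = max(x,0) + i max(y,0)`. -/
noncomputable def CReLU (z : ℂ) : ℂ := ⟨max z.re 0, max z.im 0⟩

/-- Entrywise complex ReLU on vectors. -/
noncomputable def CReLUv {n : ℕ} (x : Fin n → ℂ) : Fin n → ℂ := fun i => CReLU (x i)

/-!
The columns of `M(K, R)` are the monomial coefficients of the Bernstein polynomials
`b_{j,K}(t / R)`. Writing `|δ| = M c`, the polynomial `Σ_k |δ_k| t^k` equals
`Σ_j c_j b_{j,K}(t / R)`, which on `[0, R]` is a convex combination of the `c_j` and hence at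
most `max_j c_j`. By spectral mapping, every eigenvalue of `Σ_k δ_k Ŝ^k` is `p(λ)` with
`p = Σ_k δ_k X^k` and `λ` an eigenvalue of `Ŝ = S + E`; as `‖E‖₂ ≤ ε`, `|λ| ≤ ρ_ε(S) = R`, so
`|p(λ)| ≤ Σ_k |δ_k| |λ|^k ≤ max_j c_j`.
-/

open Finset Polynomial

lemma Mmat_blockTriangular (K : ℕ) (R : ℝ) : (Mmat K R).BlockTriangular OrderDual.toDual :=
  fun _ _ hij => if_neg (not_le.2 hij)

lemma isUnit_det_Mmat (K : ℕ) {R : ℝ} (hR : R ≠ 0) : IsUnit (Mmat K R).det := by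
  rw [det_of_isLowerTriangular _ (Mmat_blockTriangular K R), isUnit_iff_ne_zero,
    prod_ne_zero_iff]
  intro i _
  have : K.choose i ≠ 0 := (Nat.choose_pos (Nat.lt_succ_iff.1 i.2)).ne'
  simp [Mmat, this, hR]

lemma eval_bernsteinPolynomial_nonneg (K j : ℕ) {s : ℝ} (hs : s ∈ Set.Icc (0 : ℝ) 1) :
    0 ≤ (bernsteinPolynomial ℝ K j).eval s := by
  obtain ⟨hs0, hs1⟩ := hs
  have := sub_nonneg.2 hs1
  simp only [bernsteinPolynomial, eval_mul, eval_pow, eval_natCast, eval_sub, eval_one, eval_X]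
  positivity

lemma sum_Mmat_mul_pow (K : ℕ) {R : ℝ} (hR : R ≠ 0) (j : Fin (K + 1)) (t : ℝ) :
    ∑ k : Fin (K + 1), Mmat K R k j * t ^ (k : ℕ) =
      (bernsteinPolynomial ℝ K j).eval (t / R) := by
  obtain ⟨d, hd⟩ : ∃ d, K - j = d := ⟨_, rfl⟩
  set s := t / R
  have hterm : ∀ k : Fin (K + 1), Mmat K R k j * t ^ (k : ℕ) =
      if (j : ℕ) ≤ k then K.choose j * (-1) ^ (k - j : ℕ) * (d.choose (k - j)) * s ^ (k : ℕ)
      else 0 := by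
    intro k
    simp only [Mmat, s, div_pow]
    split_ifs
    · rw [hd]; field_simp
    · simp
  rw [sum_congr rfl fun k _ => hterm k,
    Fin.sum_univ_eq_sum_range (fun k => if (j : ℕ) ≤ k then
      K.choose j * (-1) ^ (k - j : ℕ) * (d.choose (k - j)) * s ^ k else (0 : ℝ)),
    show range (K + 1) = range (j + (d + 1)) by congr 1; omega, sum_range_add,
    sum_eq_zero fun k hk => if_neg (not_le.2 (mem_range.1 hk)), zero_add]
  simp only [le_add_iff_nonneg_right, zero_le, if_true, Nat.add_sub_cancel_left]
  have hbin : (1 - s) ^ d = ∑ m ∈ range (d + 1), (-s) ^ m * 1 ^ (d - m) * d.choose m := by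
    rw [← add_pow, neg_add_eq_sub]
  simp only [bernsteinPolynomial, eval_mul, eval_pow, eval_natCast, eval_sub, eval_one, eval_X,
    hd, hbin, mul_sum]
  refine sum_congr rfl fun m _ => ?_
  rw [neg_pow, pow_add]
  ring

lemma sum_Mmat_mulVec_mul_pow (K : ℕ) {R : ℝ} (hR : R ≠ 0) (c : Fin (K + 1) → ℝ) (t : ℝ) :
    ∑ k : Fin (K + 1), (Mmat K R *ᵥ c) k * t ^ (k : ℕ) =
      ∑ j : Fin (K + 1), c j * (bernsteinPolynomial ℝ K j).eval (t / R) := by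
  simp only [mulVec, dotProduct, sum_mul, ← sum_Mmat_mul_pow K hR, mul_sum]
  rw [sum_comm]
  exact sum_congr rfl fun _ _ => sum_congr rfl fun _ _ => by ring

lemma sum_eval_bernsteinPolynomial (K : ℕ) (s : ℝ) :
    ∑ j : Fin (K + 1), (bernsteinPolynomial ℝ K j).eval s = 1 := by
  rw [Fin.sum_univ_eq_sum_range (fun j => (bernsteinPolynomial ℝ K j).eval s), ← eval_finsetSum,
    bernsteinPolynomial.sum, eval_one]

lemma sum_mul_pow_le_iSup_Mmat_inv_mulVec (K : ℕ) {R : ℝ} (hR : 0 < R) (v : Fin (K + 1) → ℝ)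
    {t : ℝ} (ht : t ∈ Set.Icc 0 R) :
    ∑ k : Fin (K + 1), v k * t ^ (k : ℕ) ≤ ⨆ i, ((Mmat K R)⁻¹ *ᵥ v) i := by
  set c := (Mmat K R)⁻¹ *ᵥ v
  have hv : Mmat K R *ᵥ c = v := by
    rw [mulVec_mulVec, mul_nonsing_inv _ (isUnit_det_Mmat K hR.ne'), one_mulVec]
  have hs : t / R ∈ Set.Icc (0 : ℝ) 1 :=
    ⟨div_nonneg ht.1 hR.le, (div_le_one hR).2 ht.2⟩
  calc ∑ k : Fin (K + 1), v k * t ^ (k : ℕ)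
      = ∑ j : Fin (K + 1), c j * (bernsteinPolynomial ℝ K j).eval (t / R) := by
        rw [← hv, sum_Mmat_mulVec_mul_pow K hR.ne']
    _ ≤ ∑ j : Fin (K + 1), (⨆ i, c i) * (bernsteinPolynomial ℝ K j).eval (t / R) :=
        sum_le_sum fun j _ => mul_le_mul_of_nonneg_right
          (le_ciSup (Set.finite_range c).bddAbove j) (eval_bernsteinPolynomial_nonneg K j hs)
    _ = ⨆ i, c i := by rw [← mul_sum, sum_eval_bernsteinPolynomial, mul_one]

lemma spectrum.nontrivial_of_mem {R A : Type*} [CommSemiring R] [Ring A] [Algebra R A] {a : A}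
    {r : R} (hr : r ∈ spectrum R a) : Nontrivial A := by
  by_contra hA
  rw [not_nontrivial_iff_subsingleton] at hA
  simp [spectrum.of_subsingleton] at hr

lemma spectrum.exists_eval_eq_of_mem_aeval {𝕜 A : Type*} [Field 𝕜] [IsAlgClosed 𝕜] [Ring A]
    [Algebra 𝕜 A] [FiniteDimensional 𝕜 A] {a : A} {p : 𝕜[X]} {z : 𝕜}
    (hz : z ∈ spectrum 𝕜 (aeval a p)) : ∃ w ∈ spectrum 𝕜 a, p.eval w = z := by
  have := spectrum.nontrivial_of_mem hz
  rwa [spectrum.map_polynomial_aeval_of_nonempty a p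
    (spectrum.nonempty_of_isAlgClosed_of_finiteDimensional 𝕜 a)] at hz

lemma opNorm_eq_norm_toEuclideanCLM {n : ℕ} (A : Matrix (Fin n) (Fin n) ℂ) :
    opNorm A = ‖toEuclideanCLM (𝕜 := ℂ) A‖ :=
  rfl

lemma opNorm_add_le {n : ℕ} (A B : Matrix (Fin n) (Fin n) ℂ) :
    opNorm (A + B) ≤ opNorm A + opNorm B := by
  simp only [opNorm_eq_norm_toEuclideanCLM, map_add]
  exact norm_add_le _ _

lemma norm_le_opNorm_of_mem_spectrum {n : ℕ} {A : Matrix (Fin n) (Fin n) ℂ} {z : ℂ}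
    (hz : z ∈ spectrum ℂ A) : ‖z‖ ≤ opNorm A := by
  rw [← AlgEquiv.spectrum_eq (toEuclideanCLM (𝕜 := ℂ) (n := Fin n))] at hz
  -- `spectrum.norm_le_norm_of_mem` needs `‖1‖ = 1`, i.e. a nontrivial space, which `hz` forces.
  have := spectrum.nontrivial_of_mem hz
  have : Nontrivial (EuclideanSpace ℂ (Fin n)) := by
    by_contra hE
    rw [not_nontrivial_iff_subsingleton] at hE
    exact not_subsingleton (EuclideanSpace ℂ (Fin n) →L[ℂ] EuclideanSpace ℂ (Fin n)) inferInstance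
  exact spectrum.norm_le_norm_of_mem hz

lemma norm_le_pseudoSpecRad_of_mem_spectrum {n : ℕ} {ε : ℝ} {S E : Matrix (Fin n) (Fin n) ℂ}
    (hE : opNorm E ≤ ε) {z : ℂ} (hz : z ∈ spectrum ℂ (S + E)) : ‖z‖ ≤ pseudoSpecRad ε S := by
  refine le_csSup ⟨opNorm S + ε, ?_⟩ ⟨z, ⟨E, hE, hz⟩, rfl⟩
  rintro _ ⟨w, ⟨E', hE', hw⟩, rfl⟩
  calc ‖w‖ ≤ opNorm (S + E') := norm_le_opNorm_of_mem_spectrum hw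
    _ ≤ opNorm S + opNorm E' := opNorm_add_le S E'
    _ ≤ opNorm S + ε := by gcongr

noncomputable def filtPoly (K : ℕ) (h : ℕ → ℂ) : ℂ[X] :=
  ∑ k ∈ range (K + 1), C (h k) * X ^ k

lemma aeval_filtPoly {n : ℕ} (K : ℕ) (h : ℕ → ℂ) (S : Matrix (Fin n) (Fin n) ℂ) :
    aeval S (filtPoly K h) = filt K h S := by
  simp [filtPoly, filt, Algebra.smul_def]

lemma norm_eval_filtPoly_le (K : ℕ) (h : ℕ → ℂ) (z : ℂ) :
    ‖(filtPoly K h).eval z‖ ≤ ∑ k : Fin (K + 1), absVec K h k * ‖z‖ ^ (k : ℕ) := by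
  unfold absVec
  rw [Fin.sum_univ_eq_sum_range (fun k => ‖h k‖ * ‖z‖ ^ k)]
  simpa [filtPoly, eval_finsetSum] using norm_sum_le (range (K + 1)) fun k => h k * z ^ k

lemma filt_sub {n : ℕ} (K : ℕ) (h g : ℕ → ℂ) (S : Matrix (Fin n) (Fin n) ℂ) :
    filt K h S - filt K g S = filt K (fun k => h k - g k) S := by
  simp only [filt, ← sum_sub_distrib, sub_smul]

lemma specRad_filt_le {n : ℕ} (K : ℕ) (h : ℕ → ℂ) (S : Matrix (Fin n) (Fin n) ℂ) {r B : ℝ}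
    (hr : 0 ≤ r) (hS : ∀ z ∈ spectrum ℂ S, ‖z‖ ≤ r)
    (hB : ∀ t ∈ Set.Icc 0 r, ∑ k : Fin (K + 1), absVec K h k * t ^ (k : ℕ) ≤ B) :
    specRad (filt K h S) ≤ B := by
  have hB0 : 0 ≤ B :=
    (sum_nonneg fun _ _ => by unfold absVec; positivity).trans (hB r ⟨hr, le_rfl⟩)
  refine Real.sSup_le ?_ hB0
  rintro _ ⟨_, hz, rfl⟩
  rw [← aeval_filtPoly] at hz
  obtain ⟨w, hw, rfl⟩ := spectrum.exists_eval_eq_of_mem_aeval hz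
  exact (norm_eval_filtPoly_le K h w).trans (hB _ ⟨norm_nonneg w, hS w hw⟩)

theorem stmt_0_general {n K : ℕ}
    (S : Matrix (Fin n) (Fin n) ℂ) (ε : ℝ)
    (E : Matrix (Fin n) (Fin n) ℂ) (hE : opNorm E ≤ ε)
    (h hhat : ℕ → ℂ)
    (hR : 0 < pseudoSpecRad ε S) :
    specRad (filt K hhat (S + E) - filt K h (S + E)) ≤
      ⨆ i : Fin (K+1),
        ((Mmat K (pseudoSpecRad ε S))⁻¹ *ᵥ absVec K (fun k => hhat k - h k)) i := by
  rw [filt_sub]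
  exact specRad_filt_le K _ (S + E) hR.le
    (fun z hz => norm_le_pseudoSpecRad_of_mem_spectrum hE hz)
    (fun t ht => sum_mul_pow_le_iSup_Mmat_inv_mulVec K hR _ ht)

/-- **Spectrum Bound Transfer Error.** -/
theorem stmt_0 {n K : ℕ} (hn : 1 ≤ n) (hK : 1 ≤ K)
    (S : Matrix (Fin n) (Fin n) ℂ) (ε : ℝ) (hε : 0 < ε)
    (E : Matrix (Fin n) (Fin n) ℂ) (hE : opNorm E ≤ ε)
    (h hhat : ℕ → ℂ)
    (hR : 0 < pseudoSpecRad ε S) :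
    specRad (filt K hhat (S + E) - filt K h (S + E)) ≤
      ⨆ i : Fin (K+1),
        ((Mmat K (pseudoSpecRad ε S))⁻¹ *ᵥ absVec K (fun k => hhat k - h k)) i :=
  stmt_0_general S ε E hE h hhat hR
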